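/- Let W = (w_{ij}) ∈ ℝ^{n×n} be a nonnegative, symmetric, doubly stochastic matrix with eigenvalues 1 = λ₁ > λ₂ ≥ ⋯ ≥ λ_n and ρ := max{|λ₂|, |λ_n|} < 1. Let α > 0 and let x_1, …, x_n, t_1, …, t_n ∈ ℝ^d with averages x̄ := (1/n)Σ_i x_i and t̄ := (1/n)Σ_i t_i. Define x_i⁺ := Σ_{j=1}^n w_{ij}(x_j − α t_j) and x̄⁺ := (1/n)Σ_i x_i⁺. Then Σ_{i=1}^n ‖x_i⁺ − x̄⁺‖² ≤ ρ Σ_{i=1}^n ‖x_i − x̄‖² + (ρ²α²/(1 − ρ)) Σ_{i=1}^n ‖t_i − t̄‖². -/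

import Mathlib

/-!
Put `zᵢ := (xᵢ − x̄) − α (tᵢ − t̄)`. Because `W` has unit row and column sums,
`xᵢ⁺ − x̄⁺ = ∑ⱼ wᵢⱼ zⱼ`, and `∑ᵢ zᵢ = 0`. The column of `P` belonging to the eigenvalue `1` is
constant, since every other column is an eigenvector for an eigenvalue `≠ 1` and hence
orthogonal to `𝟏`. So `z` has no component along it, and in the orthonormal eigenbasis `W` scales
every remaining component by at most `ρ`: `∑ᵢ ‖∑ⱼ wᵢⱼ zⱼ‖² ≤ ρ² ∑ᵢ ‖zᵢ‖²`. Young's inequality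
`ρ² (a + b)² ≤ ρ a² + ρ²/(1 − ρ) b²` splits the right-hand side.
-/

open Matrix Finset
open scoped RealInnerProductSpace

section Stochastic

variable {ι : Type*} [Fintype ι] {E : Type*} [AddCommGroup E] [Module ℝ E] {W : Matrix ι ι ℝ}

theorem sum_eq_zero_of_mulVec_eq_smul (hW_cols : ∀ j, ∑ i, W i j = 1) {p : ι → ℝ} {μ : ℝ}
    (hμ : μ ≠ 1) (hp : W *ᵥ p = μ • p) : ∑ i, p i = 0 := by
  have hsum : ∑ i, (W *ᵥ p) i = ∑ j, p j := by
    simp only [mulVec, dotProduct]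
    rw [Finset.sum_comm]
    simp [← Finset.sum_mul, hW_cols]
  simp only [hp, Pi.smul_apply, smul_eq_mul, ← Finset.mul_sum] at hsum
  have : (μ - 1) * ∑ i, p i = 0 := by linarith
  exact (mul_eq_zero.mp this).resolve_left (sub_ne_zero.mpr hμ)

theorem sum_sub_average_eq_zero [Nonempty ι] (y : ι → E) :
    ∑ i, (y i - (Fintype.card ι : ℝ)⁻¹ • ∑ l, y l) = 0 := by
  rw [Finset.sum_sub_distrib, Finset.sum_const, Finset.card_univ, ← Nat.cast_smul_eq_nsmul ℝ,
    smul_smul, mul_inv_cancel₀ (by simp), one_smul, sub_self]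

theorem sum_smul_sub_smul_sum_sum (hW_rows : ∀ i, ∑ j, W i j = 1)
    (hW_cols : ∀ j, ∑ i, W i j = 1) (c : ℝ) (y : ι → E) (i : ι) :
    ∑ j, W i j • y j - c • ∑ l, ∑ j, W l j • y j = ∑ j, W i j • (y j - c • ∑ l, y l) := by
  rw [Finset.sum_comm]
  simp_rw [← Finset.sum_smul, hW_cols, one_smul, smul_sub, Finset.sum_sub_distrib,
    ← Finset.sum_smul, hW_rows, one_smul]

end Stochastic

section Spectral

variable {ι : Type*} [Fintype ι] [DecidableEq ι] {E : Type*} [NormedAddCommGroup E]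
  [InnerProductSpace ℝ E] {W P : Matrix ι ι ℝ} {lam : ι → ℝ}

theorem sum_norm_sq_sum_smul_of_transpose_mul_self {Q : Matrix ι ι ℝ} (hQ : Qᵀ * Q = 1)
    (y : ι → E) : ∑ i, ‖∑ k, Q i k • y k‖ ^ 2 = ∑ k, ‖y k‖ ^ 2 := by
  have hQ' : ∀ k l, ∑ i, Q i k * Q i l = if k = l then 1 else 0 := fun k l => by
    simpa [Matrix.mul_apply, Matrix.one_apply] using congrFun (congrFun hQ k) l
  simp_rw [← real_inner_self_eq_norm_sq, sum_inner, inner_sum, real_inner_smul_left,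
    real_inner_smul_right]
  calc ∑ i, ∑ k, ∑ l, Q i k * (Q i l * ⟪y k, y l⟫)
      = ∑ k, ∑ l, (∑ i, Q i k * Q i l) * ⟪y k, y l⟫ := by
        simp_rw [Finset.sum_mul, mul_assoc]
        rw [Finset.sum_comm]
        exact Finset.sum_congr rfl fun _ _ => Finset.sum_comm
    _ = ∑ k, ⟪y k, y k⟫ := by simp [hQ']

theorem mulVec_col_eq_smul (hP : P * Pᵀ = 1) (hdiag : W = P * diagonal lam * Pᵀ) (k : ι) :
    W *ᵥ (fun i => P i k) = lam k • fun i => P i k := by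
  have hWP : W * P = P * diagonal lam := by
    rw [hdiag, Matrix.mul_assoc, mul_eq_one_comm.mp hP, Matrix.mul_one]
  funext i
  have h := congrFun (congrFun hWP i) k
  rw [mul_diagonal, Matrix.mul_apply] at h
  simpa [mulVec, dotProduct, mul_comm] using h

/-- Expanding `𝟏 = P Pᵀ 𝟏` in the columns of `P`: if all columns but the `k₀`-th sum to zero,
the `k₀`-th column is constant. -/
theorem mul_sum_col_eq_one (hP : P * Pᵀ = 1) {k₀ : ι} (hcol : ∀ k ≠ k₀, ∑ i, P i k = 0)
    (j : ι) : P j k₀ * ∑ i, P i k₀ = 1 := by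
  have h := congrFun (Matrix.mulVec_mulVec (fun _ => (1 : ℝ)) P Pᵀ) j
  rw [hP, one_mulVec] at h
  simp only [mulVec, dotProduct, transpose_apply, mul_one] at h
  rwa [Finset.sum_eq_single k₀ (fun k _ hk => by rw [hcol k hk, mul_zero]) (by simp)] at h

theorem sum_col_smul_eq_zero (hP : P * Pᵀ = 1) (hdiag : W = P * diagonal lam * Pᵀ)
    (hW_cols : ∀ j, ∑ i, W i j = 1) {k₀ : ι} (hlam : ∀ k ≠ k₀, lam k ≠ 1) {z : ι → E}
    (hz : ∑ j, z j = 0) : ∑ j, P j k₀ • z j = 0 := by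
  have hone := mul_sum_col_eq_one hP fun k hk =>
    sum_eq_zero_of_mulVec_eq_smul hW_cols (hlam k hk) (mulVec_col_eq_smul hP hdiag k)
  have hs : (∑ i, P i k₀) • ∑ j, P j k₀ • z j = 0 := by
    simp_rw [Finset.smul_sum, smul_smul, mul_comm _ (P _ k₀), hone, one_smul]
    exact hz
  exact (smul_eq_zero.mp hs).resolve_left (right_ne_zero_of_mul_eq_one (hone k₀))

theorem sum_norm_sq_mixing_le (hP : P * Pᵀ = 1) (hdiag : W = P * diagonal lam * Pᵀ) {k₀ : ι}
    {ρ : ℝ} (hlam : ∀ k ≠ k₀, |lam k| ≤ ρ) {z : ι → E} (hz : ∑ j, P j k₀ • z j = 0) :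
    ∑ i, ‖∑ j, W i j • z j‖ ^ 2 ≤ ρ ^ 2 * ∑ i, ‖z i‖ ^ 2 := by
  set c : ι → E := fun k => ∑ j, P j k • z j
  have hWz : ∀ i, ∑ j, W i j • z j = ∑ k, P i k • lam k • c k := fun i => by
    rw [hdiag]
    simp only [Matrix.mul_apply (M := P * diagonal lam), mul_diagonal, transpose_apply, c,
      Finset.smul_sum, smul_smul, Finset.sum_smul]
    rw [Finset.sum_comm]
    exact Finset.sum_congr rfl fun _ _ => Finset.sum_congr rfl fun _ _ => by ring_nf
  have hc : ∑ k, ‖c k‖ ^ 2 = ∑ j, ‖z j‖ ^ 2 := by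
    simpa using sum_norm_sq_sum_smul_of_transpose_mul_self (Q := Pᵀ) (by simpa using hP) z
  calc ∑ i, ‖∑ j, W i j • z j‖ ^ 2 = ∑ k, ‖lam k • c k‖ ^ 2 := by
        simp_rw [hWz]
        exact sum_norm_sq_sum_smul_of_transpose_mul_self (mul_eq_one_comm.mp hP) _
    _ ≤ ∑ k, ρ ^ 2 * ‖c k‖ ^ 2 := by
        gcongr with k
        by_cases hk : k = k₀
        · simp [hk, c, hz]
        · rw [norm_smul, mul_pow, Real.norm_eq_abs]
          gcongr
          exact hlam k hk
    _ = ρ ^ 2 * ∑ i, ‖z i‖ ^ 2 := by rw [← Finset.mul_sum, hc]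

end Spectral

theorem abs_le_max_abs_of_antitone {n : ℕ} {f : Fin n → ℝ} (hf : Antitone f) (hn : 1 < n)
    {k : Fin n} (hk : k ≠ ⟨0, Nat.zero_lt_of_lt hn⟩) :
    |f k| ≤ max |f ⟨1, hn⟩| |f ⟨n - 1, Nat.sub_one_lt_of_lt hn⟩| := by
  have h1 : ⟨1, hn⟩ ≤ k := by
    simp only [ne_eq, Fin.ext_iff, Fin.le_def] at hk ⊢; omega
  have h2 : k ≤ ⟨n - 1, Nat.sub_one_lt_of_lt hn⟩ := by simp only [Fin.le_def]; omega
  rw [max_comm]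
  exact abs_le_max_abs_abs (hf h2) (hf h1)

theorem sq_mul_sq_add_le {ρ : ℝ} (hρ0 : 0 ≤ ρ) (hρ1 : ρ < 1) (a b : ℝ) :
    ρ ^ 2 * (a + b) ^ 2 ≤ ρ * a ^ 2 + ρ ^ 2 / (1 - ρ) * b ^ 2 := by
  have hgap : ρ * a ^ 2 + ρ ^ 2 / (1 - ρ) * b ^ 2 - ρ ^ 2 * (a + b) ^ 2
      = ρ / (1 - ρ) * ((1 - ρ) * a - ρ * b) ^ 2 := by
    field_simp [(sub_pos.mpr hρ1).ne']
    ring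
  have hgap_nonneg := mul_nonneg (div_nonneg hρ0 (sub_pos.mpr hρ1).le) (sq_nonneg ((1 - ρ) * a - ρ * b))
  linarith

theorem sq_mul_norm_sub_smul_sq_le {E : Type*} [SeminormedAddCommGroup E] [NormedSpace ℝ E]
    {ρ : ℝ} (hρ0 : 0 ≤ ρ) (hρ1 : ρ < 1) (α : ℝ) (u v : E) :
    ρ ^ 2 * ‖u - α • v‖ ^ 2 ≤ ρ * ‖u‖ ^ 2 + ρ ^ 2 * α ^ 2 / (1 - ρ) * ‖v‖ ^ 2 := by
  have htri : ‖u - α • v‖ ≤ ‖u‖ + |α| * ‖v‖ :=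
    (norm_sub_le _ _).trans_eq (by rw [norm_smul, Real.norm_eq_abs])
  calc ρ ^ 2 * ‖u - α • v‖ ^ 2 ≤ ρ ^ 2 * (‖u‖ + |α| * ‖v‖) ^ 2 := by gcongr
    _ ≤ ρ * ‖u‖ ^ 2 + ρ ^ 2 / (1 - ρ) * (|α| * ‖v‖) ^ 2 := sq_mul_sq_add_le hρ0 hρ1 _ _
    _ = ρ * ‖u‖ ^ 2 + ρ ^ 2 * α ^ 2 / (1 - ρ) * ‖v‖ ^ 2 := by rw [mul_pow, sq_abs]; ring

/-- Consensus-error contraction for the `x`-update of SLDBO: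
with `W` nonnegative, symmetric, doubly stochastic with spectral parameter
`ρ = max{|λ₂|, |λₙ|} < 1`, step size `α > 0`, and `xᵢ⁺ = ∑ⱼ w_{ij}(xⱼ − α tⱼ)`, we have
`∑ ‖xᵢ⁺ − x̄⁺‖² ≤ ρ ∑ ‖xᵢ − x̄‖² + (ρ²α²/(1−ρ)) ∑ ‖tᵢ − t̄‖²`. -/
theorem consensus_error_x_update {n d : ℕ} (hn : 2 ≤ n)
    (W : Matrix (Fin n) (Fin n) ℝ)
    (hW_rows : ∀ i, ∑ j, W i j = 1)
    (hW_cols : ∀ j, ∑ i, W i j = 1)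
    (lam : Fin n → ℝ) (P : Matrix (Fin n) (Fin n) ℝ)
    (hP : P * Pᵀ = 1)
    (hdiag : W = P * Matrix.diagonal lam * Pᵀ)
    (hmono : Antitone lam)
    (ρ : ℝ)
    (hρdef : ρ = max |lam ⟨1, by omega⟩| |lam ⟨n - 1, by omega⟩|)
    (hρlt : ρ < 1)
    (α : ℝ)
    (x t : Fin n → EuclideanSpace ℝ (Fin d))
    (xplus : Fin n → EuclideanSpace ℝ (Fin d))
    (hxplus : ∀ i, xplus i = ∑ j, W i j • (x j - α • t j)) :
    ∑ i, ‖xplus i - (n : ℝ)⁻¹ • ∑ l, xplus l‖ ^ 2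
      ≤ ρ * ∑ i, ‖x i - (n : ℝ)⁻¹ • ∑ l, x l‖ ^ 2
        + ρ ^ 2 * α ^ 2 / (1 - ρ) * ∑ i, ‖t i - (n : ℝ)⁻¹ • ∑ l, t l‖ ^ 2 := by
  have hρ0 : 0 ≤ ρ := hρdef ▸ le_max_of_le_left (abs_nonneg _)
  have hlam : ∀ k ≠ (⟨0, by omega⟩ : Fin n), |lam k| ≤ ρ := fun k hk =>
    hρdef ▸ abs_le_max_abs_of_antitone hmono hn hk
  set y := fun j => x j - α • t j
  set z := fun j => y j - (n : ℝ)⁻¹ • ∑ l, y l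
  have : Nonempty (Fin n) := ⟨⟨0, by omega⟩⟩
  have hz : ∑ j, z j = 0 := by simpa only [Fintype.card_fin] using sum_sub_average_eq_zero y
  have hdev : ∀ i, xplus i - (n : ℝ)⁻¹ • ∑ l, xplus l = ∑ j, W i j • z j := fun i => by
    simp only [hxplus]
    exact sum_smul_sub_smul_sum_sum hW_rows hW_cols _ y i
  have hzxt : ∀ j, z j = (x j - (n : ℝ)⁻¹ • ∑ l, x l) - α • (t j - (n : ℝ)⁻¹ • ∑ l, t l) :=
    fun j => by
      simp only [z, y, Finset.sum_sub_distrib, ← Finset.smul_sum]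
      module
  have hlam_ne : ∀ k ≠ (⟨0, by omega⟩ : Fin n), lam k ≠ 1 := fun k hk =>
    ((le_abs_self _).trans (hlam k hk)).trans_lt hρlt |>.ne
  calc _ = ∑ i, ‖∑ j, W i j • z j‖ ^ 2 := by simp_rw [hdev]
    _ ≤ ρ ^ 2 * ∑ i, ‖z i‖ ^ 2 :=
      sum_norm_sq_mixing_le hP hdiag hlam (sum_col_smul_eq_zero hP hdiag hW_cols hlam_ne hz)
    _ ≤ _ := by
      rw [Finset.mul_sum, Finset.mul_sum, Finset.mul_sum, ← Finset.sum_add_distrib]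
      gcongr with i
      rw [hzxt]
      exact sq_mul_norm_sub_smul_sq_le hρ0 hρlt α _ _
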